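/- For the Boolean tree T_{N,Bool} = {∅, 1, 2, ..., N} (with N ≥ 2), the cumulant coefficients satisfy α_{T_{N,Bool}, π} = 1 if π is an interval partition and α_{T_{N,Bool}, π} = 0 otherwise. -/

import Mathlib

/-- The alternating reduction of a string: replace each maximal run of
consecutive equal letters by a single occurrence of that letter. -/
def red {α : Type*} [DecidableEq α] : List α → List α
  | [] => []
  | [a] => [a]
  | a :: b :: t => if a = b then red (b :: t) else a :: red (b :: t)

/-- A rooted subtree of the tree of alternating strings on alphabet `α`. -/
def IsRootedSubtree {α : Type*} (S : Set (List α)) : Prop :=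
  (∀ s ∈ S, s.Chain' (· ≠ ·)) ∧ [] ∈ S ∧ ∀ s ∈ S, s.tail ∈ S

/-- Partitions of finite subsets of `ℕ` (finite totally ordered sets, up to
isomorphism), given by their set of blocks. -/
abbrev Blocks : Type := Finset (Finset ℕ)

/-- `π` is a non-crossing partition (of its ground set `⋃ π`). -/
def IsNC (π : Blocks) : Prop :=
  (∀ B ∈ π, B.Nonempty) ∧
  (∀ B ∈ π, ∀ C ∈ π, B ≠ C → Disjoint B C) ∧
  (∀ B ∈ π, ∀ C ∈ π, B ≠ C →
    ¬ ∃ i₁ j₁ i₂ j₂ : ℕ, i₁ < j₁ ∧ j₁ < i₂ ∧ i₂ < j₂ ∧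
      i₁ ∈ B ∧ i₂ ∈ B ∧ j₁ ∈ C ∧ j₂ ∈ C)

/-- `V` is nested inside `W`. -/
def NestedIn (V W : Finset ℕ) : Prop :=
  ∃ j ∈ W, ∃ k ∈ W, ∀ x ∈ V, j < x ∧ x < k

/-- `V` is immediately nested inside `W` (an edge of the nesting tree of `π`). -/
def ImmNested (π : Blocks) (V W : Finset ℕ) : Prop :=
  NestedIn V W ∧ ¬ ∃ X ∈ π, NestedIn V X ∧ NestedIn X W

/-- Adjacency of blocks in the nesting tree `graph(π)` (away from the root). -/
def AdjBlocks (π : Blocks) (V W : Finset ℕ) : Prop :=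
  ImmNested π V W ∨ ImmNested π W V

/-- `V` and `W` lie in the same `χ`-component of `π`: they are joined by a path
in `graph(π) ∖ {∅}` all of whose edges join blocks of the same color. -/
def sameComp {N : ℕ} (π : Blocks) (χ : Finset ℕ → Fin N) (V W : Finset ℕ) : Prop :=
  Relation.ReflTransGen
    (fun X Y => X ∈ π ∧ Y ∈ π ∧ AdjBlocks π X Y ∧ χ X = χ Y) V W

open Classical in
noncomputable def component {N : ℕ} (π : Blocks) (χ : Finset ℕ → Fin N)
    (V : Finset ℕ) : Finset (Finset ℕ) :=
  π.filter (fun W => sameComp π χ V W)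

-- The `χ`-components of `π`.
open Classical in
noncomputable def components {N : ℕ} (π : Blocks) (χ : Finset ℕ → Fin N) :
    Finset Blocks :=
  π.image (fun V => component π χ V)

/-- `L` is the chain of `V` in `π`: the list `(V, V₁, …, V_d)` consisting of `V`
followed by all blocks surrounding `V`, each nested in the next. -/
def IsChainList (π : Blocks) (V : Finset ℕ) (L : List (Finset ℕ)) : Prop :=
  L.head? = some V ∧ (∀ W, W ∈ L.tail ↔ W ∈ π ∧ NestedIn V W) ∧
  L.Chain' (fun X Y => NestedIn X Y) ∧ L.Nodup

/-- `χ ∈ X_w(π,T)`: for every block `V`, the alternating reduction of the color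
string along the chain of `V` lies in `T`. -/
def WeaklyCompatible {N : ℕ} (T : Set (List (Fin N))) (π : Blocks)
    (χ : Finset ℕ → Fin N) : Prop :=
  ∀ V ∈ π, ∀ L : List (Finset ℕ), IsChainList π V L → red (L.map χ) ∈ T

/-- Extend a coloring of the blocks of `π` by a junk value. -/
def extendColor {N : ℕ} [NeZero N] (π : Blocks)
    (χ : {V : Finset ℕ // V ∈ π} → Fin N) : Finset ℕ → Fin N :=
  fun W => if h : W ∈ π then χ ⟨W, h⟩ else 0

-- The right-hand side of the fixed-point identity for the cumulant
-- coefficients: `n^{−|π|} Σ_{χ ∈ X_w(π,T)} Π_{χ-components π'} a(π')`.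
open Classical in
noncomputable def cumulantRHS {N : ℕ} [NeZero N] (n : ℕ) (T : Set (List (Fin N)))
    (a : Blocks → ℝ) (π : Blocks) : ℝ :=
  (∑ χ : ({V : Finset ℕ // V ∈ π} → Fin N),
      if WeaklyCompatible T π (extendColor π χ) then
        ∏ τ ∈ components π (extendColor π χ), a τ
      else 0) / (n : ℝ) ^ π.card

/-- `a` is a family of cumulant coefficients for `T`: normalized on one-block
partitions, and satisfying the fixed-point identity for all non-crossing `π`. -/
def SatisfiesFP {N : ℕ} [NeZero N] (n : ℕ) (T : Set (List (Fin N)))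
    (a : Blocks → ℝ) : Prop :=
  (∀ π : Blocks, IsNC π → π.card = 1 → a π = 1) ∧
  (∀ π : Blocks, IsNC π → a π = cumulantRHS n T a π)

/-- `π` is an interval partition: every block is order-convex within the ground set. -/
def IsIntervalPart (π : Blocks) : Prop :=
  ∀ B ∈ π, ∀ x ∈ B, ∀ z ∈ B, ∀ y ∈ π.biUnion id, x ≤ y → y ≤ z → y ∈ B

/-!
For the Boolean tree a color string reduces into `T_{N,Bool}` exactly when it is constant, so a
coloring is weakly compatible iff it is constant along nestings. Hence the `χ`-components of every
compatible `χ` are the components of the nesting forest of `π`, there are `N ^ c(π)` compatible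
colorings, and the fixed-point identity becomes `a π = N ^ (c(π) - |π|) * ∏ a τ` over those
components. For an interval partition nothing is nested, the components are single blocks and
`a π = 1`. Otherwise the component `τ` of a nested pair of blocks is not an interval partition:
if `τ ⊂ π` then `a τ = 0` by strong induction, and if `τ = π` the identity reads
`a π = N ^ (1 - |π|) * a π` with `|π| ≥ 2`; either way `a π = 0`.
-/

section Reduction

variable {α : Type*} [DecidableEq α]

theorem red_eq_nil_iff {l : List α} : red l = [] ↔ l = [] := by
  fun_induction red l <;> simp_all

theorem red_eq_singleton_iff {l : List α} {c : α} :
    red l = [c] ↔ l ≠ [] ∧ ∀ x ∈ l, x = c := by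
  fun_induction red l with
  | case1 => simp
  | case2 a => simp
  | case3 b t ih => simp [ih]
  | case4 a b t hab =>
    simp only [List.cons.injEq, red_eq_nil_iff, ne_eq, reduceCtorEq, not_false_eq_true,
      List.mem_cons, forall_eq_or_imp, true_and, and_false, false_iff, not_and, not_forall]
    rintro rfl rfl
    exact (hab rfl).elim

end Reduction

theorem NestedIn.trans {U V W : Finset ℕ} (h₁ : NestedIn U V) (h₂ : NestedIn V W) :
    NestedIn U W := by
  obtain ⟨j, hj, k, hk, h₁⟩ := h₁
  obtain ⟨j', hj', k', hk', h₂⟩ := h₂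
  exact ⟨j', hj', k', hk', fun x hx =>
    ⟨(h₂ j hj).1.trans (h₁ x hx).1, (h₁ x hx).2.trans (h₂ k hk).2⟩⟩

theorem NestedIn.irrefl (V : Finset ℕ) : ¬ NestedIn V V := by
  rintro ⟨j, hj, _, _, h⟩
  exact lt_irrefl j (h j hj).1

theorem NestedIn.min_lt {V W : Finset ℕ} (h : NestedIn V W) (hV : V.Nonempty) :
    W.min < V.min := by
  obtain ⟨j, hj, _, _, h⟩ := h
  rw [← Finset.coe_min' hV]
  exact (Finset.min_le hj).trans_lt (WithTop.coe_lt_coe.2 (h _ (Finset.min'_mem V hV)).1)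

namespace IsNC

variable {π : Blocks}

theorem subset (hπ : IsNC π) {σ : Blocks} (h : σ ⊆ π) : IsNC σ :=
  ⟨fun B hB => hπ.1 B (h hB),
   fun B hB C hC => hπ.2.1 B (h hB) C (h hC),
   fun B hB C hC => hπ.2.2 B (h hB) C (h hC)⟩

theorem nestedIn_of_lt_of_lt (hπ : IsNC π) {W X : Finset ℕ} (hW : W ∈ π) (hX : X ∈ π)
    (hWX : W ≠ X) {i j k : ℕ} (hi : i ∈ X) (hj : j ∈ W) (hk : k ∈ X) (hij : i < j)
    (hjk : j < k) : NestedIn W X := by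
  have hdisj := Finset.disjoint_left.1 (hπ.2.1 W hW X hX hWX)
  refine ⟨i, hi, k, hk, fun w hw => ⟨?_, ?_⟩⟩
  · refine lt_of_not_ge fun hwi => hπ.2.2 W hW X hX hWX ?_
    exact ⟨w, i, j, k, (hwi.lt_of_ne fun h => hdisj hw (h ▸ hi)), hij, hjk, hw, hj, hi, hk⟩
  · refine lt_of_not_ge fun hkw => hπ.2.2 X hX W hW hWX.symm ?_
    exact ⟨i, j, k, w, hij, hjk, (hkw.lt_of_ne fun h => hdisj hw (h ▸ hk)), hi, hk, hj, hw⟩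

theorem nestedIn_total (hπ : IsNC π) {V W X : Finset ℕ} (hV : V.Nonempty) (hW : W ∈ π)
    (hX : X ∈ π) (hWX : W ≠ X) (hVW : NestedIn V W) (hVX : NestedIn V X) :
    NestedIn W X ∨ NestedIn X W := by
  obtain ⟨v, hv⟩ := hV
  obtain ⟨j₁, hj₁, k₁, hk₁, hb₁⟩ := hVW
  obtain ⟨j₂, hj₂, k₂, hk₂, hb₂⟩ := hVX
  rcases lt_trichotomy j₁ j₂ with h | rfl | h
  · exact .inr (hπ.nestedIn_of_lt_of_lt hX hW hWX.symm hj₁ hj₂ hk₁ h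
      ((hb₂ v hv).1.trans (hb₁ v hv).2))
  · exact absurd hj₂ (Finset.disjoint_left.1 (hπ.2.1 W hW X hX hWX) hj₁)
  · exact .inl (hπ.nestedIn_of_lt_of_lt hW hX hWX hj₂ hj₁ hk₂ h
      ((hb₁ v hv).1.trans (hb₂ v hv).2))

theorem isIntervalPart_iff (hπ : IsNC π) :
    IsIntervalPart π ↔ ∀ V ∈ π, ∀ W ∈ π, ¬ NestedIn V W := by
  constructor
  · rintro hint V hV W hW ⟨j, hj, k, hk, hb⟩
    obtain ⟨v, hv⟩ := hπ.1 V hV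
    have hvW : v ∈ W := hint W hW j hj k hk v (Finset.mem_biUnion.2 ⟨V, hV, hv⟩)
      (hb v hv).1.le (hb v hv).2.le
    have hVW : V ≠ W := by rintro rfl; exact NestedIn.irrefl V ⟨j, hj, k, hk, hb⟩
    exact Finset.disjoint_left.1 (hπ.2.1 V hV W hW hVW) hv hvW
  · intro hnest B hB x hx z hz y hy hxy hyz
    by_contra hyB
    obtain ⟨C, hC, hyC⟩ := Finset.mem_biUnion.1 hy
    have hCB : C ≠ B := by rintro rfl; exact hyB hyC
    exact hnest C hC B hB (hπ.nestedIn_of_lt_of_lt hC hB hCB hx hyC hz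
      (hxy.lt_of_ne (by rintro rfl; exact hyB hx)) (hyz.lt_of_ne (by rintro rfl; exact hyB hz)))

/-- The blocks surrounding `V`, sorted by decreasing minimum, form the chain of `V`. -/
theorem exists_isChainList (hπ : IsNC π) {V : Finset ℕ} (hV : V ∈ π) :
    ∃ L, IsChainList π V L := by
  classical
  have hVne := hπ.1 V hV
  let L := (π.filter (NestedIn V)).toList.mergeSort (fun X Y => decide (Y.min ≤ X.min))
  have hmem : ∀ W, W ∈ L ↔ W ∈ π ∧ NestedIn V W := by simp [L, List.mem_mergeSort]
  have hsorted : L.Pairwise (fun X Y => Y.min ≤ X.min) :=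
    (List.pairwise_mergeSort (le := fun X Y : Finset ℕ => decide (Y.min ≤ X.min))
      (fun _ _ _ h₁ h₂ => decide_eq_true ((of_decide_eq_true h₂).trans (of_decide_eq_true h₁)))
      (fun X Y => by simpa only [Bool.or_eq_true, decide_eq_true_eq] using le_total Y.min X.min)
      _).imp of_decide_eq_true
  have hnodup : L.Nodup := List.nodup_mergeSort.2 (Finset.nodup_toList _)
  have hpair : (V :: L).Pairwise NestedIn := by
    refine List.pairwise_cons.2 ⟨fun W hW => ((hmem W).1 hW).2, ?_⟩
    refine (hsorted.and hnodup).imp_of_mem fun {X Y} hX hY ⟨hle, hne⟩ => ?_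
    obtain ⟨hXπ, hVX⟩ := (hmem X).1 hX
    obtain ⟨hYπ, hVY⟩ := (hmem Y).1 hY
    refine (hπ.nestedIn_total hVne hXπ hYπ hne hVX hVY).resolve_right fun hYX => ?_
    exact not_lt.2 hle (hYX.min_lt (hπ.1 Y hYπ))
  refine ⟨V :: L, rfl, fun W => by simpa using hmem W, hpair.isChain, ?_⟩
  exact hpair.imp fun {X Y} (hXY : NestedIn X Y) (h : X = Y) => NestedIn.irrefl Y (h ▸ hXY)

end IsNC

abbrev boolTree (N : ℕ) : Set (List (Fin N)) := {s | s = [] ∨ ∃ j : Fin N, s = [j]}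

def IsNestingInvariant {β : Type*} (π : Blocks) (χ : Finset ℕ → β) : Prop :=
  ∀ V ∈ π, ∀ W ∈ π, NestedIn V W → χ V = χ W

theorem weaklyCompatible_boolTree_iff {N : ℕ} {π : Blocks} (hπ : IsNC π)
    (χ : Finset ℕ → Fin N) :
    WeaklyCompatible (boolTree N) π χ ↔ IsNestingInvariant π χ := by
  constructor
  · intro h V hV W hW hVW
    obtain ⟨L, hL⟩ := hπ.exists_isChainList hV
    obtain ⟨t, rfl⟩ : ∃ t, L = V :: t := by
      cases L with
      | nil => simp [IsChainList] at hL
      | cons X t => exact ⟨t, by simpa [IsChainList] using hL.1⟩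
    rcases h V hV _ hL with hnil | ⟨j, hj⟩
    · simp [red_eq_nil_iff] at hnil
    · have hconst := (red_eq_singleton_iff.1 hj).2
      have hWt : W ∈ t := (hL.2.1 W).2 ⟨hW, hVW⟩
      rw [hconst (χ V) (by simp), hconst (χ W) (List.mem_map_of_mem (List.mem_cons_of_mem V hWt))]
  · rintro h V hV L ⟨hhead, htail, -, -⟩
    obtain ⟨t, rfl⟩ : ∃ t, L = V :: t := by
      cases L with
      | nil => simp at hhead
      | cons X t => exact ⟨t, by simpa using hhead⟩
    refine .inr ⟨χ V, red_eq_singleton_iff.2 ⟨by simp, ?_⟩⟩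
    simp only [List.map_cons, List.mem_cons, List.mem_map, forall_eq_or_imp, true_and,
      forall_exists_index, and_imp, forall_apply_eq_imp_iff₂]
    intro W hW
    obtain ⟨hWπ, hVW⟩ := (htail W).1 hW
    exact (h V hV W hWπ hVW).symm

/-- Induct on the number of elements of `s` between `a` and `b`: any one of them splits the gap
into two smaller ones. -/
theorem reflTransGen_covBy_of_rel {α : Type*} {r : α → α → Prop} (s : Finset α)
    (htrans : ∀ {a b c}, r a b → r b c → r a c) (hirr : ∀ a ∈ s, ¬ r a a) {a b : α}
    (ha : a ∈ s) (hb : b ∈ s) (hab : r a b) :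
    Relation.ReflTransGen (fun x y => x ∈ s ∧ y ∈ s ∧ r x y ∧ ¬ ∃ c ∈ s, r x c ∧ r c y) a b := by
  classical
  induction hn : (s.filter fun c => r a c ∧ r c b).card using Nat.strong_induction_on
    generalizing a b with
  | _ n ih =>
    by_cases hcov : ∃ c ∈ s, r a c ∧ r c b
    · obtain ⟨c, hc, hac, hcb⟩ := hcov
      have hmem : c ∈ s.filter fun d => r a d ∧ r d b := Finset.mem_filter.2 ⟨hc, hac, hcb⟩
      have hleft : (s.filter fun d => r a d ∧ r d c) ⊂ s.filter fun d => r a d ∧ r d b :=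
        Finset.ssubset_iff_of_subset (fun d hd => by
          simp only [Finset.mem_filter] at hd ⊢; exact ⟨hd.1, hd.2.1, htrans hd.2.2 hcb⟩) |>.2
          ⟨c, hmem, fun h => hirr c hc (Finset.mem_filter.1 h).2.2⟩
      have hright : (s.filter fun d => r c d ∧ r d b) ⊂ s.filter fun d => r a d ∧ r d b :=
        Finset.ssubset_iff_of_subset (fun d hd => by
          simp only [Finset.mem_filter] at hd ⊢; exact ⟨hd.1, htrans hac hd.2.1, hd.2.2⟩) |>.2
          ⟨c, hmem, fun h => hirr c hc (Finset.mem_filter.1 h).2.1⟩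
      exact (ih _ (hn ▸ Finset.card_lt_card hleft) ha hc hac rfl).trans
        (ih _ (hn ▸ Finset.card_lt_card hright) hc hb hcb rfl)
    · exact .single ⟨ha, hb, hab, hcov⟩

def NestAdj (π : Blocks) (X Y : Finset ℕ) : Prop :=
  X ∈ π ∧ Y ∈ π ∧ AdjBlocks π X Y

instance (π : Blocks) : Std.Symm (NestAdj π) :=
  ⟨fun _ _ h => ⟨h.2.1, h.1, h.2.2.symm⟩⟩

theorem reflTransGen_nestAdj_of_nestedIn {π : Blocks} {V W : Finset ℕ} (hV : V ∈ π)
    (hW : W ∈ π) (hVW : NestedIn V W) : Relation.ReflTransGen (NestAdj π) V W :=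
  Relation.ReflTransGen.mono (fun _ _ h => ⟨h.1, h.2.1, .inl ⟨h.2.2.1, h.2.2.2⟩⟩) _ _
    (reflTransGen_covBy_of_rel (r := NestedIn) π NestedIn.trans (fun X _ => NestedIn.irrefl X)
      hV hW hVW)

theorem IsNestingInvariant.eq_of_reflTransGen {β : Type*} {π : Blocks} {χ : Finset ℕ → β}
    (hχ : IsNestingInvariant π χ) {V W : Finset ℕ} (h : Relation.ReflTransGen (NestAdj π) V W) :
    χ V = χ W := by
  induction h with
  | refl => rfl
  | tail _ hXY ih =>
    obtain ⟨hX, hY, hXY | hYX⟩ := hXY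
    · exact ih.trans (hχ _ hX _ hY hXY.1)
    · exact ih.trans (hχ _ hY _ hX hYX.1).symm

open Classical in
noncomputable def nestComponent (π : Blocks) (V : Finset ℕ) : Blocks :=
  π.filter (Relation.ReflTransGen (NestAdj π) V)

open Classical in
noncomputable def nestComponents (π : Blocks) : Finset Blocks :=
  π.image (nestComponent π)

theorem mem_nestComponent {π : Blocks} {V W : Finset ℕ} :
    W ∈ nestComponent π V ↔ W ∈ π ∧ Relation.ReflTransGen (NestAdj π) V W := by
  classical exact Finset.mem_filter

theorem nestComponent_subset (π : Blocks) (V : Finset ℕ) : nestComponent π V ⊆ π :=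
  fun _ h => (mem_nestComponent.1 h).1

theorem self_mem_nestComponent {π : Blocks} {V : Finset ℕ} (hV : V ∈ π) :
    V ∈ nestComponent π V :=
  mem_nestComponent.2 ⟨hV, .refl⟩

theorem nestComponent_mem_nestComponents {π : Blocks} {V : Finset ℕ} (hV : V ∈ π) :
    nestComponent π V ∈ nestComponents π := by
  classical exact Finset.mem_image_of_mem _ hV

theorem nestComponent_eq_of_reflTransGen {π : Blocks} {V W : Finset ℕ}
    (h : Relation.ReflTransGen (NestAdj π) V W) : nestComponent π V = nestComponent π W := by
  ext X
  simp only [mem_nestComponent]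
  exact and_congr_right fun _ => ⟨(Std.Symm.symm _ _ h).trans, h.trans⟩

theorem isNestingInvariant_iff {β : Type*} {π : Blocks} (χ : Finset ℕ → β) :
    IsNestingInvariant π χ ↔
      ∀ V ∈ π, ∀ W ∈ π, nestComponent π V = nestComponent π W → χ V = χ W := by
  refine ⟨fun hχ V hV W _ hVW => ?_, fun hχ V hV W hW hVW => hχ V hV W hW
    (nestComponent_eq_of_reflTransGen (reflTransGen_nestAdj_of_nestedIn hV hW hVW))⟩
  have hW : W ∈ nestComponent π V := hVW ▸ self_mem_nestComponent ‹W ∈ π›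
  exact hχ.eq_of_reflTransGen (mem_nestComponent.1 hW).2

theorem components_eq_nestComponents {N : ℕ} {π : Blocks} {χ : Finset ℕ → Fin N}
    (hχ : IsNestingInvariant π χ) : components π χ = nestComponents π := by
  have hrel : (fun X Y => X ∈ π ∧ Y ∈ π ∧ AdjBlocks π X Y ∧ χ X = χ Y) = NestAdj π := by
    ext X Y
    refine ⟨fun h => ⟨h.1, h.2.1, h.2.2.1⟩, fun h => ⟨h.1, h.2.1, h.2.2, ?_⟩⟩
    exact hχ.eq_of_reflTransGen (.single h)
  unfold components nestComponents component sameComp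
  rw [hrel]
  rfl

theorem extendColor_of_mem {N : ℕ} [NeZero N] {π : Blocks} (χ : {V // V ∈ π} → Fin N)
    {V : Finset ℕ} (hV : V ∈ π) : extendColor π χ V = χ ⟨V, hV⟩ :=
  dif_pos hV

open Classical in
theorem card_filter_weaklyCompatible_boolTree {N : ℕ} [NeZero N] {π : Blocks} (hπ : IsNC π) :
    ({χ : {V // V ∈ π} → Fin N | WeaklyCompatible (boolTree N) π (extendColor π χ)} :
      Finset _).card = N ^ (nestComponents π).card := by
  classical
  let f : {V // V ∈ π} → {τ // τ ∈ nestComponents π} :=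
    fun V => ⟨nestComponent π V, nestComponent_mem_nestComponents V.2⟩
  have hf : Function.Surjective f := by
    rintro ⟨τ, hτ⟩
    obtain ⟨V, hV, rfl⟩ := Finset.mem_image.1 hτ
    exact ⟨⟨V, hV⟩, rfl⟩
  have hfilter : ({χ | WeaklyCompatible (boolTree N) π (extendColor π χ)} :
      Finset ({V // V ∈ π} → Fin N)) = Finset.univ.image fun g => g ∘ f := by
    ext χ
    simp only [Finset.mem_filter, Finset.mem_univ, true_and, Finset.mem_image,
      weaklyCompatible_boolTree_iff hπ, isNestingInvariant_iff, eq_comm (b := χ)]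
    rw [← Function.factorsThrough_iff]
    refine ⟨fun h V W hVW => ?_, fun h V hV W hW hVW => ?_⟩
    · simpa only [extendColor_of_mem χ V.2, extendColor_of_mem χ W.2] using
        h V V.2 W W.2 (congrArg Subtype.val hVW)
    · simpa only [extendColor_of_mem χ hV, extendColor_of_mem χ hW] using
        h (a := ⟨V, hV⟩) (b := ⟨W, hW⟩) (Subtype.ext hVW)
  rw [hfilter, Finset.card_image_of_injective _ hf.injective_comp_right, Finset.card_univ,
    Fintype.card_fun, Fintype.card_fin, Fintype.card_coe]

theorem cumulantRHS_boolTree {N : ℕ} [NeZero N] {π : Blocks} (hπ : IsNC π) (a : Blocks → ℝ) :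
    cumulantRHS N (boolTree N) a π =
      (N : ℝ) ^ (nestComponents π).card * (∏ τ ∈ nestComponents π, a τ) / (N : ℝ) ^ π.card := by
  classical
  rw [cumulantRHS]
  congr 1
  have hsummand : ∀ χ : {V // V ∈ π} → Fin N,
      (if WeaklyCompatible (boolTree N) π (extendColor π χ) then
        ∏ τ ∈ components π (extendColor π χ), a τ else 0) =
      if WeaklyCompatible (boolTree N) π (extendColor π χ) then
        ∏ τ ∈ nestComponents π, a τ else 0 := fun χ => by
    split_ifs with h
    · rw [components_eq_nestComponents ((weaklyCompatible_boolTree_iff hπ _).1 h)]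
    · rfl
  rw [Finset.sum_congr rfl fun χ _ => hsummand χ, ← Finset.sum_filter, Finset.sum_const,
    card_filter_weaklyCompatible_boolTree hπ, nsmul_eq_mul, Nat.cast_pow]

theorem nestComponents_of_isIntervalPart {π : Blocks} (hπ : IsNC π) (hint : IsIntervalPart π) :
    nestComponents π = π.image fun V => {V} := by
  have hnoadj : ∀ X Y, ¬ NestAdj π X Y := by
    rintro X Y ⟨hX, hY, hXY | hYX⟩
    exacts [(hπ.isIntervalPart_iff.1 hint) X hX Y hY hXY.1,
      (hπ.isIntervalPart_iff.1 hint) Y hY X hX hYX.1]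
  refine Finset.image_congr fun V hV => Finset.ext fun W => ?_
  rw [mem_nestComponent, Finset.mem_singleton, Relation.reflTransGen_iff_eq (hnoadj V)]
  exact ⟨And.right, fun h => ⟨h ▸ hV, h⟩⟩

theorem nestComponents_eq_singleton {π : Blocks} {V : Finset ℕ} (hV : V ∈ π)
    (h : nestComponent π V = π) : nestComponents π = {π} := by
  classical
  have hπ := nestComponent_mem_nestComponents hV
  rw [h] at hπ
  refine Finset.eq_singleton_iff_unique_mem.2 ⟨hπ, fun τ hτ => ?_⟩
  obtain ⟨U, hU, rfl⟩ := Finset.mem_image.1 hτ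
  rw [← h] at hU
  rw [← nestComponent_eq_of_reflTransGen (mem_nestComponent.1 hU).2, h]

theorem eq_zero_of_eq_mul_div_pow {x n : ℝ} {k : ℕ} (hn : 1 < n) (hk : 1 < k)
    (h : x = n * x / n ^ k) : x = 0 := by
  have hlt : n < n ^ k := by simpa using pow_lt_pow_right₀ hn hk
  rw [eq_div_iff (by positivity)] at h
  nlinarith [mul_eq_zero.1 (show x * (n ^ k - n) = 0 by linear_combination h)]

namespace SatisfiesFP

variable {N : ℕ} [NeZero N] {a : Blocks → ℝ}

theorem eq_one_of_isIntervalPart (ha : SatisfiesFP N (boolTree N) a) {π : Blocks} (hπ : IsNC π)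
    (hint : IsIntervalPart π) : a π = 1 := by
  have hN : (N : ℝ) ≠ 0 := Nat.cast_ne_zero.2 (NeZero.ne N)
  have hsingle : ∀ V ∈ π, a {V} = 1 := fun V hV =>
    ha.1 {V} (hπ.subset (Finset.singleton_subset_iff.2 hV)) (Finset.card_singleton V)
  rw [ha.2 π hπ, cumulantRHS_boolTree hπ, nestComponents_of_isIntervalPart hπ hint,
    Finset.card_image_of_injective _ Finset.singleton_injective,
    Finset.prod_image fun _ _ _ _ h => Finset.singleton_injective h,
    Finset.prod_eq_one hsingle, mul_one, div_self (pow_ne_zero _ hN)]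

theorem eq_zero_of_not_isIntervalPart (ha : SatisfiesFP N (boolTree N) a) (hN : 2 ≤ N)
    {π : Blocks} (hπ : IsNC π) (hint : ¬ IsIntervalPart π) : a π = 0 := by
  induction π using Finset.strongInduction with
  | H π ih =>
  obtain ⟨V, hV, W, hW, hVW⟩ : ∃ V ∈ π, ∃ W ∈ π, NestedIn V W := by
    simpa [hπ.isIntervalPart_iff] using hint
  set τ := nestComponent π V
  have hτπ : τ ⊆ π := nestComponent_subset π V
  have hτ : ¬ IsIntervalPart τ := fun h => (hπ.subset hτπ).isIntervalPart_iff.1 h V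
    (self_mem_nestComponent hV) W
    (mem_nestComponent.2 ⟨hW, reflTransGen_nestAdj_of_nestedIn hV hW hVW⟩) hVW
  have hrhs := (ha.2 π hπ).trans (cumulantRHS_boolTree hπ a)
  rcases hτπ.ssubset_or_eq with hlt | hτeq
  · rw [hrhs, Finset.prod_eq_zero (nestComponent_mem_nestComponents hV)
      (ih τ hlt (hπ.subset hτπ) hτ), mul_zero, zero_div]
  · rw [nestComponents_eq_singleton hV hτeq, Finset.card_singleton, pow_one,
      Finset.prod_singleton] at hrhs
    refine eq_zero_of_eq_mul_div_pow (by exact_mod_cast hN) ?_ hrhs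
    exact Finset.one_lt_card.2 ⟨V, hV, W, hW, fun h => NestedIn.irrefl V (h ▸ hVW)⟩

end SatisfiesFP

open Classical in
theorem stmt11 {N : ℕ} [NeZero N] (hN : 2 ≤ N)
    (a : Blocks → ℝ)
    (ha : SatisfiesFP N {s : List (Fin N) | s = [] ∨ ∃ j : Fin N, s = [j]} a) :
    ∀ π : Blocks, IsNC π → a π = if IsIntervalPart π then 1 else 0 := by
  intro π hπ
  split_ifs with hint
  · exact ha.eq_one_of_isIntervalPart hπ hint
  · exact ha.eq_zero_of_not_isIntervalPart hN hπ hint
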